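/- If eight distinct points p_1,...,p_8 in P^3 form the complete intersection of three quadrics in P^3, then any seven of them impose independent conditions on quadrics in P^3. -/

import Mathlib

/-!
The common zero locus `Z` of the three quadrics is the finite set of the eight points, and `K` is
infinite, so `Z` contains no line and no conic. Hence no three of the points are collinear (a
quadric through three points of a line contains it), and no five are coplanar (the conics of a
plane through five points, no three of them collinear, are multiples of a single conic, which
would lie in `Z`).

Given `j ≠ i`, it suffices to find a quadric through the six points other than `p i`, `p j` that
misses `p j`. Call a triple of the six points bad if its plane contains `p j`. Two bad triples share
at most one point, for otherwise `p j` and four of the six points would be coplanar; so there are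
at most `15 / 3 = 5` bad triples. One of the ten splittings of the six points into two triples
therefore has no bad half, and the product of the two planes through the halves is the quadric.
-/

open MvPolynomial

/-- Two nonzero vectors represent the same point of projective space:
they differ by a nonzero scalar. -/
def ProjEq {K : Type*} [Field K] {n : ℕ} (x y : Fin n → K) : Prop :=
  ∃ c : K, c ≠ 0 ∧ y = c • x

/-- A family of nonzero vectors represents pairwise distinct points
of projective space. -/
def ProjDistinct {K : Type*} [Field K] {n m : ℕ} (p : Fin m → Fin n → K) : Prop :=
  (∀ i, p i ≠ 0) ∧ ∀ i j, i ≠ j → ¬ ProjEq (p i) (p j)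

/-- Eight points of `P³` (given by nonzero representative vectors) form the
complete intersection of three quadrics: the common zero locus of three
quadratic forms is exactly the set of the eight points. -/
def IsCIofThreeQuadrics {K : Type*} [Field K] (p : Fin 8 → Fin 4 → K) : Prop :=
  ∃ Q₁ Q₂ Q₃ : MvPolynomial (Fin 4) K,
    Q₁.IsHomogeneous 2 ∧ Q₂.IsHomogeneous 2 ∧ Q₃.IsHomogeneous 2 ∧
    ∀ x : Fin 4 → K, x ≠ 0 →
      ((eval x Q₁ = 0 ∧ eval x Q₂ = 0 ∧ eval x Q₃ = 0) ↔ ∃ i, ProjEq (p i) x)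

open Submodule

theorem Finsupp.exists_eq_single_add_single_of_degree_eq_two {σ : Type*} {d : σ →₀ ℕ}
    (hd : d.degree = 2) : ∃ i j, d = single i 1 + single j 1 := by
  classical
  obtain ⟨i, j, hij⟩ := Multiset.card_eq_two.mp ((Finsupp.card_toMultiset d).trans hd)
  refine ⟨i, j, ?_⟩
  rw [← Finsupp.toMultiset_toFinsupp d, hij, Multiset.insert_eq_cons, ← Multiset.singleton_add,
    map_add, Multiset.toFinsupp_singleton, Multiset.toFinsupp_singleton]

theorem MvPolynomial.IsHomogeneous.exists_quadraticMap_eval_eq {σ K : Type*} [CommSemiring K]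
    {Q : MvPolynomial σ K} (hQ : Q.IsHomogeneous 2) :
    ∃ q : QuadraticMap K (σ → K) K, ∀ x, q x = eval x Q := by
  rw [Q.as_sum]
  refine Finset.sum_induction _ (fun P => ∃ q : QuadraticMap K (σ → K) K, ∀ x, q x = eval x P)
    (fun _ _ ⟨q, hq⟩ ⟨q', hq'⟩ => ⟨q + q', by simp [hq, hq']⟩) ⟨0, by simp⟩ fun d hd => ?_
  obtain ⟨i, j, rfl⟩ : ∃ i j, d = Finsupp.single i 1 + Finsupp.single j 1 :=
    Finsupp.exists_eq_single_add_single_of_degree_eq_two <| by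
      rw [Finsupp.degree_eq_weight_one]; exact hQ (mem_support_iff.mp hd)
  refine ⟨coeff (Finsupp.single i 1 + Finsupp.single j 1) Q •
    QuadraticMap.linMulLin (LinearMap.proj i) (LinearMap.proj j), fun x => ?_⟩
  simp [eval_monomial, Finsupp.prod_add_index', pow_add]

theorem QuadraticMap.map_smul_add_smul {R M : Type*} [CommRing R] [AddCommGroup M] [Module R M]
    (q : QuadraticMap R M R) (s t : R) (x y : M) :
    q (s • x + t • y) = s * s * q x + t * t * q y + s * t * polar q x y := by
  calc q (s • x + t • y) = q (s • x) + q (t • y) + polar q (s • x) (t • y) := by rw [polar]; ring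
  _ = _ := by
    rw [polar_smul_left, polar_smul_right, QuadraticMap.map_smul, QuadraticMap.map_smul]
    simp only [smul_eq_mul]; ring

theorem QuadraticMap.map_smul_add_smul_add_smul {R M : Type*} [CommRing R] [AddCommGroup M]
    [Module R M] (q : QuadraticMap R M R) (s t u : R) (x y z : M) :
    q (s • x + t • y + u • z) = s * s * q x + t * t * q y + u * u * q z +
      s * t * polar q x y + s * u * polar q x z + t * u * polar q y z := by
  rw [← one_smul R (s • x + t • y), map_smul_add_smul, map_smul_add_smul, polar_add_left,
    polar_smul_left, polar_smul_left]
  simp only [smul_eq_mul]; ring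

theorem LinearIndependent.eq_of_triple {R M : Type*} [Semiring R] [AddCommMonoid M] [Module R M]
    {x y z : M} (h : LinearIndependent R ![x, y, z]) {a b c a' b' c' : R}
    (h' : a • x + b • y + c • z = a' • x + b' • y + c' • z) : a = a' ∧ b = b' ∧ c = c' := by
  have := Fintype.linearIndependent_iffₛ.mp h ![a, b, c] ![a', b', c']
    (by simpa [Fin.sum_univ_three, add_assoc] using h')
  exact ⟨this 0, this 1, this 2⟩

theorem LinearIndependent.notMem_span_pair {K V : Type*} [DivisionRing K] [AddCommGroup V]
    [Module K V] {x y z : V} (h : LinearIndependent K ![x, y, z]) : x ∉ span K {y, z} := by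
  simpa [Matrix.range_cons, Set.pair_comm] using (linearIndependent_finCons.mp h).2

theorem Set.finite_setOf_add_mul_eq_zero {K : Type*} [CommRing K] [NoZeroDivisors K] {a b : K}
    (ha : a ≠ 0) : {t : K | a + t * b = 0}.Finite := by
  refine Set.Subsingleton.finite fun t (ht : a + t * b = 0) t' (ht' : a + t' * b = 0) => ?_
  have hb : b ≠ 0 := by rintro rfl; simp_all
  have : (t - t') * b = 0 := by linear_combination ht - ht'
  simpa [hb, sub_eq_zero] using this

namespace Finset

variable {α : Type*}

theorem card_mul_choose_two_le_of_subset_powersetCard {s : Finset α} {S : Finset (Finset α)}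
    {k : ℕ} (hS : S ⊆ s.powersetCard k)
    (hpair : ∀ A ∈ S, ∀ B ∈ S, ∀ P : Finset α, #P = 2 → P ⊆ A → P ⊆ B → A = B) :
    #S * k.choose 2 ≤ (#s).choose 2 := by
  classical
  have hdisj : (S : Set (Finset α)).PairwiseDisjoint (powersetCard 2) := by
    intro A hA B hB hAB
    refine disjoint_left.mpr fun P hPA hPB => hAB ?_
    rw [mem_powersetCard] at hPA hPB
    exact hpair A hA B hB P hPA.2 hPA.1 hPB.1
  calc #S * k.choose 2 = #(S.biUnion (powersetCard 2)) := by
        rw [card_biUnion hdisj, sum_const_nat fun A hA => ?_]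
        rw [card_powersetCard, (mem_powersetCard.mp (hS hA)).2]
    _ ≤ #(s.powersetCard 2) := card_le_card <| biUnion_subset.mpr fun A hA =>
        powersetCard_mono (mem_powersetCard.mp (hS hA)).1
    _ = (#s).choose 2 := card_powersetCard 2 s

theorem exists_mem_powersetCard_three_notMem_of_card_eq_six [DecidableEq α] {s : Finset α}
    (hs : #s = 6) {S : Finset (Finset α)} (hS : S ⊆ s.powersetCard 3)
    (hpair : ∀ A ∈ S, ∀ B ∈ S, ∀ P : Finset α, #P = 2 → P ⊆ A → P ⊆ B → A = B) :
    ∃ A ∈ s.powersetCard 3, A ∉ S ∧ s \ A ∉ S := by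
  by_contra! hcover
  have hsmall := card_mul_choose_two_le_of_subset_powersetCard hS hpair
  have hlarge : #(s.powersetCard 3) ≤ #S + #(S.image (s \ ·)) := by
    refine (card_le_card fun A hA => ?_).trans (card_union_le _ _)
    rw [mem_union, mem_image]
    by_cases hAS : A ∈ S
    · exact .inl hAS
    · exact .inr ⟨s \ A, hcover A hA hAS, sdiff_sdiff_eq_self (mem_powersetCard.mp hA).1⟩
  rw [card_powersetCard, hs, show Nat.choose 6 3 = 20 by rfl] at hlarge
  rw [hs, show Nat.choose 6 2 = 15 by rfl, show Nat.choose 3 2 = 3 by rfl] at hsmall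
  have := card_image_le (s := S) (f := (s \ ·))
  omega

end Finset

theorem Module.exists_dual_apply_ne_zero_of_notMem_span {K V : Type*} [Field K] [AddCommGroup V]
    [Module K V] {s : Set V} {x : V} (hx : x ∉ span K s) :
    ∃ f : Module.Dual K V, f x ≠ 0 ∧ ∀ y ∈ s, f y = 0 := by
  obtain ⟨f, hfx, hf⟩ := exists_dual_map_eq_bot_of_notMem hx inferInstance
  rw [← LinearMap.le_ker_iff_map, span_le] at hf
  exact ⟨f, hfx, hf⟩

section CommonZeros

variable {K V ι κ : Type*} [Field K] [AddCommGroup V] [Module K V]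

def commonZeros (q : κ → QuadraticForm K V) : Set V := {x | ∀ k, q k x = 0}

variable {q : κ → QuadraticForm K V} {p : ι → V}

theorem finite_of_mapsTo_commonZeros [Finite ι] (hZ : commonZeros q ⊆ ⋃ i, (K ∙ p i : Set V))
    {T : Type*} {S : Set T} {f : T → V} (hf : Set.MapsTo f S (commonZeros q))
    (hf0 : ∀ t ∈ S, f t ≠ 0) (hinj : ∀ t ∈ S, ∀ t' ∈ S, ∀ c : K, f t = c • f t' → t = t') :
    S.Finite := by
  refine (Set.finite_iUnion fun i =>
    Set.Subsingleton.finite (s := {t ∈ S | f t ∈ K ∙ p i}) ?_).subset fun t ht =>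
      Set.mem_iUnion.mpr ?_
  · rintro t ⟨ht, hti⟩ t' ⟨ht', hti'⟩
    obtain ⟨a, ha⟩ := mem_span_singleton.mp hti
    obtain ⟨b, hb⟩ := mem_span_singleton.mp hti'
    have hb0 : b ≠ 0 := by rintro rfl; exact hf0 t' ht' (by rw [← hb, zero_smul])
    exact hinj t ht t' ht' (a / b) (by rw [← ha, ← hb, smul_smul, div_mul_cancel₀ a hb0])
  · obtain ⟨i, hi⟩ := Set.mem_iUnion.mp (hZ (hf ht))
    exact ⟨i, ht, hi⟩

theorem smul_add_smul_notMem_commonZeros [Finite ι] [Infinite K]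
    (hZ : commonZeros q ⊆ ⋃ i, (K ∙ p i : Set V)) {x y : V} (hxy : LinearIndependent K ![x, y])
    (hx : x ∈ commonZeros q) (hy : y ∈ commonZeros q) {a b : K} (ha : a ≠ 0) (hb : b ≠ 0) :
    a • x + b • y ∉ commonZeros q := by
  intro h
  have hpolar : ∀ k, QuadraticMap.polar (q k) x y = 0 := fun k => by
    have := h k
    rw [QuadraticMap.map_smul_add_smul, hx k, hy k] at this
    simpa [ha, hb] using this
  refine Set.infinite_univ (finite_of_mapsTo_commonZeros hZ
    (f := fun t : K => (1 : K) • x + t • y) (fun t _ k => ?_) (fun t _ h0 => ?_)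
    fun t _ t' _ c h => ?_)
  · change q k ((1 : K) • x + t • y) = 0
    rw [QuadraticMap.map_smul_add_smul, hx k, hy k, hpolar k]
    ring
  · exact one_ne_zero (hxy.eq_zero_of_pair h0).1
  · rw [smul_add, smul_smul, smul_smul] at h
    obtain ⟨h1, h2⟩ := hxy.eq_of_pair h
    rw [mul_one] at h1
    rw [h2, ← h1, one_mul]

theorem smul_add_smul_add_smul_notMem_commonZeros [Finite ι] [Infinite K]
    (hZ : commonZeros q ⊆ ⋃ i, (K ∙ p i : Set V)) {a b c : V}
    (habc : LinearIndependent K ![a, b, c]) (ha : a ∈ commonZeros q) (hb : b ∈ commonZeros q)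
    (hc : c ∈ commonZeros q) {d₀ d₁ d₂ e₀ e₁ e₂ : K} (hd₀ : d₀ ≠ 0) (hd₁ : d₁ ≠ 0)
    (hd₂ : d₂ ≠ 0) (he₂ : e₂ ≠ 0) (hdet : d₀ * e₁ ≠ d₁ * e₀)
    (hd : d₀ • a + d₁ • b + d₂ • c ∈ commonZeros q) :
    e₀ • a + e₁ • b + e₂ • c ∉ commonZeros q := by
  intro he
  -- In coordinates `(s, t, u)` with respect to `a, b, c`, the Cremona map
  -- `σ (s, t, u) = (t u, s u, s t)` turns `q k ∘ σ` into `y₀ y₁ y₂ ℓ y` with `ℓ` linear and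
  -- vanishing at `σ d` and `σ e`; so the points `σ (σ d + t • σ e)`, which sweep out the conic
  -- through `a, b, c, d, e`, are common zeros.
  obtain ⟨y₀, hy₀⟩ : ∃ y₀ : K → K, ∀ t, y₀ t = d₁ * d₂ + t * (e₁ * e₂) := ⟨_, fun _ => rfl⟩
  obtain ⟨y₁, hy₁⟩ : ∃ y₁ : K → K, ∀ t, y₁ t = d₀ * d₂ + t * (e₀ * e₂) := ⟨_, fun _ => rfl⟩
  obtain ⟨y₂, hy₂⟩ : ∃ y₂ : K → K, ∀ t, y₂ t = d₀ * d₁ + t * (e₀ * e₁) := ⟨_, fun _ => rfl⟩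
  have hS : ({t | y₀ t = 0} ∪ {t | y₁ t = 0} ∪ {t | y₂ t = 0})ᶜ.Infinite := by
    simp only [hy₀, hy₁, hy₂]
    exact (((Set.finite_setOf_add_mul_eq_zero (mul_ne_zero hd₁ hd₂)).union
      (Set.finite_setOf_add_mul_eq_zero (mul_ne_zero hd₀ hd₂))).union
      (Set.finite_setOf_add_mul_eq_zero (mul_ne_zero hd₀ hd₁))).infinite_compl
  have hplane : ∀ k (s t u : K), q k (s • a + t • b + u • c) =
      s * t * QuadraticMap.polar (q k) a b + s * u * QuadraticMap.polar (q k) a c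
        + t * u * QuadraticMap.polar (q k) b c := by
    intro k s t u
    rw [QuadraticMap.map_smul_add_smul_add_smul, ha k, hb k, hc k]
    ring
  refine hS (finite_of_mapsTo_commonZeros hZ
    (f := fun t => (y₁ t * y₂ t) • a + (y₀ t * y₂ t) • b + (y₀ t * y₁ t) • c)
    (fun t _ k => ?_) (fun t ht h0 => ?_) fun t ht t' ht' r h => ?_)
  · have hd := hd k
    have he := he k
    rw [hplane] at hd he ⊢
    have hlin : y₂ t * QuadraticMap.polar (q k) a b + y₁ t * QuadraticMap.polar (q k) a c
        + y₀ t * QuadraticMap.polar (q k) b c = 0 := by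
      rw [hy₀, hy₁, hy₂]
      linear_combination hd + t * he
    linear_combination (y₀ t * y₁ t * y₂ t) * hlin
  · simp only [Set.compl_union, Set.mem_inter_iff, Set.mem_compl_iff, Set.mem_ofPred_eq] at ht
    have := (habc.eq_of_triple (a' := 0) (b' := 0) (c' := 0) (by rw [h0]; simp)).2.2
    exact mul_ne_zero ht.1.1 ht.1.2 this
  · simp only [Set.compl_union, Set.mem_inter_iff, Set.mem_compl_iff, Set.mem_ofPred_eq]
      at ht ht'
    simp only [smul_add, smul_smul] at h
    obtain ⟨h₁, h₂, -⟩ := habc.eq_of_triple h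
    have hrel : y₁ t * y₀ t' - y₀ t * y₁ t' = (t' - t) * (d₂ * e₂ * (d₀ * e₁ - d₁ * e₀)) := by
      rw [hy₀, hy₀, hy₁, hy₁]
      ring
    have key : y₂ t * y₂ t' * ((t' - t) * (d₂ * e₂ * (d₀ * e₁ - d₁ * e₀))) = 0 := by
      rw [← hrel]
      linear_combination y₀ t' * y₂ t' * h₁ - y₁ t' * y₂ t' * h₂
    simpa [ht.2, ht'.2, hd₂, he₂, sub_ne_zero.mpr hdet, sub_eq_zero, eq_comm] using key

structure IsZeroLocus (q : κ → QuadraticForm K V) (p : ι → V) : Prop where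
  mem : ∀ i, p i ∈ commonZeros q
  subset : commonZeros q ⊆ ⋃ i, (K ∙ p i : Set V)
  pairwise_linearIndependent : Pairwise fun i j => LinearIndependent K ![p i, p j]

namespace IsZeroLocus

variable [Finite ι] [Infinite K] (h : IsZeroLocus q p)
include h

theorem linearIndependent_three {a b c : ι} (hab : a ≠ b) (hac : a ≠ c) (hbc : b ≠ c) :
    LinearIndependent K ![p a, p b, p c] := by
  refine linearIndependent_finCons.mpr ⟨h.pairwise_linearIndependent hbc, fun hspan => ?_⟩
  obtain ⟨β, γ, hβγ⟩ :=
    mem_span_pair.mp (by simpa [Matrix.range_cons, Set.pair_comm] using hspan)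
  have hβ : β ≠ 0 := by
    rintro rfl
    have := (h.pairwise_linearIndependent hac).eq_of_pair (s := 1) (t := 0) (s' := 0) (t' := γ)
      (by rw [← hβγ]; simp)
    exact one_ne_zero this.1
  have hγ : γ ≠ 0 := by
    rintro rfl
    have := (h.pairwise_linearIndependent hab).eq_of_pair (s := 1) (t := 0) (s' := 0) (t' := β)
      (by rw [← hβγ]; simp)
    exact one_ne_zero this.1
  exact smul_add_smul_notMem_commonZeros h.subset (h.pairwise_linearIndependent hbc) (h.mem b)
    (h.mem c) hβ hγ (hβγ ▸ h.mem a)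

theorem notMem_span_of_mem_span {a b c d e : ι} (hdist : [a, b, c, d, e].Nodup)
    (hd : p d ∈ span K {p a, p b, p c}) : p e ∉ span K {p a, p b, p c} := by
  simp only [List.nodup_cons, List.mem_cons, List.not_mem_nil, List.nodup_nil, or_false, not_or,
    and_true, not_false_eq_true] at hdist
  obtain ⟨⟨hab, hac, had, hae⟩, ⟨hbc, hbd, hbe⟩, ⟨hcd, hce⟩, hde⟩ := hdist
  intro he
  obtain ⟨d₀, d₁, d₂, hd⟩ := mem_span_triple.mp hd
  obtain ⟨e₀, e₁, e₂, he⟩ := mem_span_triple.mp he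
  have hd₀ : d₀ ≠ 0 := by
    rintro rfl
    exact (h.linearIndependent_three (Ne.symm hbd) (Ne.symm hcd) hbc).notMem_span_pair
      (mem_span_pair.mpr ⟨d₁, d₂, by rw [← hd, zero_smul, zero_add]⟩)
  have hd₁ : d₁ ≠ 0 := by
    rintro rfl
    exact (h.linearIndependent_three (Ne.symm had) (Ne.symm hcd) hac).notMem_span_pair
      (mem_span_pair.mpr ⟨d₀, d₂, by rw [← hd, zero_smul, add_zero]⟩)
  have hd₂ : d₂ ≠ 0 := by
    rintro rfl
    exact (h.linearIndependent_three (Ne.symm had) (Ne.symm hbd) hab).notMem_span_pair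
      (mem_span_pair.mpr ⟨d₀, d₁, by rw [← hd, zero_smul, add_zero]⟩)
  have he₂ : e₂ ≠ 0 := by
    rintro rfl
    exact (h.linearIndependent_three (Ne.symm hae) (Ne.symm hbe) hab).notMem_span_pair
      (mem_span_pair.mpr ⟨e₀, e₁, by rw [← he, zero_smul, add_zero]⟩)
  have hdet : d₀ * e₁ ≠ d₁ * e₀ := by
    intro hdet
    refine (h.linearIndependent_three (Ne.symm hde) (Ne.symm hce) (Ne.symm hcd)).notMem_span_pair
      (mem_span_pair.mpr ⟨e₀ / d₀, (d₀ * e₂ - e₀ * d₂) / d₀, ?_⟩)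
    rw [← hd, ← he]
    match_scalars <;> field_simp
    · linear_combination -hdet
    · ring
  exact smul_add_smul_add_smul_notMem_commonZeros h.subset
    (h.linearIndependent_three hab hac hbc) (h.mem a) (h.mem b) (h.mem c) hd₀ hd₁ hd₂ he₂ hdet
    (hd ▸ h.mem d) (he ▸ h.mem e)

theorem notMem_span_insert_of_mem_span_insert {j x y z z' : ι} (hdist : [j, x, y, z, z'].Nodup)
    (hz : p j ∈ span K {p z, p x, p y}) : p j ∉ span K {p z', p x, p y} := by
  simp only [List.nodup_cons, List.mem_cons, List.not_mem_nil, List.nodup_nil, or_false, not_or,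
    and_true, not_false_eq_true] at hdist
  obtain ⟨⟨hjx, hjy, hjz, hjz'⟩, ⟨hxy, hxz, hxz'⟩, ⟨hyz, hyz'⟩, hzz'⟩ := hdist
  intro hz'
  have hz'_mem : p z' ∈ span K {p z, p x, p y} :=
    span_le.mpr (Set.insert_subset hz (subset_span.trans (span_mono (by grind))))
      (mem_span_insert_exchange hz' (h.linearIndependent_three hjx hjy hxy).notMem_span_pair)
  exact h.notMem_span_of_mem_span
    (by simp [*, Ne.symm hxz, Ne.symm hyz, Ne.symm hjx, Ne.symm hjy, Ne.symm hjz]) hz hz'_mem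

theorem eq_of_subset_of_mem_span_image {j : ι} {A B P : Finset ι}
    (hA : A.card = 3) (hB : B.card = 3) (hjA : j ∉ A) (hjB : j ∉ B)
    (hAj : p j ∈ span K (p '' A)) (hBj : p j ∈ span K (p '' B)) (hP : P.card = 2)
    (hPA : P ⊆ A) (hPB : P ⊆ B) : A = B := by
  classical
  obtain ⟨z, hzP, rfl⟩ := Finset.exists_eq_insert_iff.mpr ⟨hPA, by omega⟩
  obtain ⟨z', hz'P, rfl⟩ := Finset.exists_eq_insert_iff.mpr ⟨hPB, by omega⟩
  obtain ⟨x, y, hxy, rfl⟩ := Finset.card_eq_two.mp hP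
  by_contra hne
  have hzz' : z ≠ z' := fun h => hne (h ▸ rfl)
  simp only [Finset.mem_insert, Finset.mem_singleton, not_or] at hzP hz'P hjA hjB
  simp only [Finset.coe_insert, Finset.coe_singleton, Set.image_insert_eq, Set.image_singleton]
    at hAj hBj
  exact h.notMem_span_insert_of_mem_span_insert
    (by simp [*, Ne.symm hzP.1, Ne.symm hzP.2, Ne.symm hz'P.1, Ne.symm hz'P.2]) hAj hBj

theorem exists_dual_mul_separating (hcard : Nat.card ι = 8) {i j : ι} (hij : j ≠ i) :
    ∃ f g : Module.Dual K V, f (p j) * g (p j) ≠ 0 ∧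
      ∀ k, k ≠ i → k ≠ j → f (p k) * g (p k) = 0 := by
  classical
  have := Fintype.ofFinite ι
  set s := (Finset.univ.erase i).erase j
  have hs : s.card = 6 := by
    simp [s, Finset.card_erase_of_mem, hij, ← Nat.card_eq_fintype_card, hcard]
  obtain ⟨A, hA, hAgood, hAgood'⟩ :=
    Finset.exists_mem_powersetCard_three_notMem_of_card_eq_six hs
    (S := (s.powersetCard 3).filter fun A => p j ∈ span K (p '' A)) (Finset.filter_subset _ _)
    fun A hA B hB P hP hPA hPB => by
      simp only [Finset.mem_filter, Finset.mem_powersetCard] at hA hB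
      exact h.eq_of_subset_of_mem_span_image hA.1.2 hB.1.2
        (fun hj => by simpa [s] using hA.1.1 hj) (fun hj => by simpa [s] using hB.1.1 hj)
        hA.2 hB.2 hP hPA hPB
  rw [Finset.mem_powersetCard] at hA
  obtain ⟨f, hfj, hf⟩ :=
    Module.exists_dual_apply_ne_zero_of_notMem_span (by simpa [hA] using hAgood)
  obtain ⟨g, hgj, hg⟩ := Module.exists_dual_apply_ne_zero_of_notMem_span
    (by simpa [hA, Finset.card_sdiff_of_subset hA.1, hs] using hAgood')
  refine ⟨f, g, mul_ne_zero hfj hgj, fun k hki hkj => ?_⟩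
  by_cases hk : k ∈ A
  · rw [hf _ ⟨k, hk, rfl⟩, zero_mul]
  · rw [hg _ ⟨k, by simp [s, hk, hki, hkj], rfl⟩, mul_zero]

end IsZeroLocus
end CommonZeros

theorem MvPolynomial.exists_isHomogeneous_one_eval_eq {σ K : Type*} [Fintype σ] [CommSemiring K]
    (f : Module.Dual K (σ → K)) :
    ∃ L : MvPolynomial σ K, L.IsHomogeneous 1 ∧ ∀ x, eval x L = f x := by
  classical
  refine ⟨∑ r, C (f (Pi.single r 1)) * X r,
    IsHomogeneous.sum _ _ _ fun r _ => (isHomogeneous_X K r).C_mul _, fun x => ?_⟩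
  rw [f.pi_apply_eq_sum_univ x, map_sum]
  refine Finset.sum_congr rfl fun r _ => ?_
  rw [eval_mul, eval_C, eval_X, smul_eq_mul, mul_comm]
  congr 2
  ext j
  simp [Pi.single_apply, eq_comm]

theorem MvPolynomial.exists_isHomogeneous_eval_eq_of_separating {σ ι K : Type*} [Field K] {n : ℕ}
    (P : ι → σ → K) (s : Finset ι)
    (hsep : ∀ j ∈ s, ∃ N : MvPolynomial σ K, N.IsHomogeneous n ∧ eval (P j) N ≠ 0 ∧
      ∀ k ∈ s, k ≠ j → eval (P k) N = 0) (v : ι → K) :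
    ∃ Q : MvPolynomial σ K, Q.IsHomogeneous n ∧ ∀ k ∈ s, eval (P k) Q = v k := by
  choose! N hN hNj hNk using hsep
  refine ⟨∑ j ∈ s, C (v j / eval (P j) (N j)) * N j,
    IsHomogeneous.sum _ _ _ fun j hj => (hN j hj).C_mul _, fun k hk => ?_⟩
  rw [map_sum, Finset.sum_eq_single_of_mem k hk fun j hj hjk => by
    simp [hNk j hj k hk (Ne.symm hjk)]]
  simp [hNj k hk]

theorem ProjDistinct.linearIndependent_pair {K : Type*} [Field K] {n m : ℕ}
    {p : Fin m → Fin n → K} (hp : ProjDistinct p) {i j : Fin m} (hij : i ≠ j) :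
    LinearIndependent K ![p i, p j] := by
  refine linearIndependent_fin2.mpr ⟨by simpa using hp.1 j, fun a ha => ?_⟩
  simp only [Matrix.cons_val_one, Matrix.cons_val_zero] at ha
  have ha0 : a ≠ 0 := by rintro rfl; exact hp.1 i (by simpa using ha.symm)
  exact hp.2 i j hij ⟨a⁻¹, inv_ne_zero ha0, by simp [← ha, smul_smul, ha0]⟩

theorem IsCIofThreeQuadrics.exists_isZeroLocus {K : Type*} [Field K] {p : Fin 8 → Fin 4 → K}
    (hci : IsCIofThreeQuadrics p) (hp : ProjDistinct p) :
    ∃ q : Fin 3 → QuadraticForm K (Fin 4 → K), IsZeroLocus q p := by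
  obtain ⟨Q₁, Q₂, Q₃, hQ₁, hQ₂, hQ₃, hQ⟩ := hci
  obtain ⟨q₁, hq₁⟩ := hQ₁.exists_quadraticMap_eval_eq
  obtain ⟨q₂, hq₂⟩ := hQ₂.exists_quadraticMap_eval_eq
  obtain ⟨q₃, hq₃⟩ := hQ₃.exists_quadraticMap_eval_eq
  have hZ : ∀ x, x ∈ commonZeros ![q₁, q₂, q₃] ↔
      eval x Q₁ = 0 ∧ eval x Q₂ = 0 ∧ eval x Q₃ = 0 := by
    simp [commonZeros, Fin.forall_fin_succ, hq₁, hq₂, hq₃]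
  refine ⟨![q₁, q₂, q₃],
    fun i => (hZ _).mpr ((hQ _ (hp.1 i)).mpr ⟨i, 1, one_ne_zero, by simp⟩),
    fun x hx => Set.mem_iUnion.mpr ?_, fun i j hij => hp.linearIndependent_pair hij⟩
  by_cases hx0 : x = 0
  · exact ⟨0, hx0 ▸ zero_mem _⟩
  obtain ⟨i, c, -, rfl⟩ := (hQ x hx0).mp ((hZ x).mp hx)
  exact ⟨i, smul_mem _ c (mem_span_singleton_self _)⟩

/-- If eight distinct points of `P³` form the complete
intersection of three quadrics, then any seven of them impose independent
conditions on quadrics of `P³`. -/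
theorem seven_of_eight_ci_points_independent {K : Type*} [Field K] [IsAlgClosed K]
    (p : Fin 8 → Fin 4 → K) (hp : ProjDistinct p) (hci : IsCIofThreeQuadrics p) :
    ∀ i : Fin 8, ∀ v : Fin 8 → K, ∃ Q : MvPolynomial (Fin 4) K,
      Q.IsHomogeneous 2 ∧ ∀ j, j ≠ i → eval (p j) Q = v j := by
  intro i v
  obtain ⟨q, hq⟩ := hci.exists_isZeroLocus hp
  suffices hsep : ∀ j ∈ Finset.univ.erase i, ∃ N : MvPolynomial (Fin 4) K, N.IsHomogeneous 2 ∧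
      eval (p j) N ≠ 0 ∧ ∀ k ∈ Finset.univ.erase i, k ≠ j → eval (p k) N = 0 by
    obtain ⟨Q, hQ, hQv⟩ := exists_isHomogeneous_eval_eq_of_separating p _ hsep v
    exact ⟨Q, hQ, fun j hj => hQv j (Finset.mem_erase.mpr ⟨hj, Finset.mem_univ j⟩)⟩
  intro j hj
  obtain ⟨f, g, hfg, hfg0⟩ :=
    hq.exists_dual_mul_separating (by simp) (Finset.ne_of_mem_erase hj)
  obtain ⟨L, hL, hLf⟩ := exists_isHomogeneous_one_eval_eq f
  obtain ⟨M, hM, hMg⟩ := exists_isHomogeneous_one_eval_eq g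
  refine ⟨L * M, hL.mul hM, by simpa [hLf, hMg] using hfg, fun k hk hkj => ?_⟩
  simpa [hLf, hMg] using hfg0 k (Finset.ne_of_mem_erase hk) hkj
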